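/- arXiv:1607.00345 — 5 statements merged into one kernel-verified Lean document; each statement's English description precedes it below -/
import Mathlib

section
/- If f : ℝ^d → ℝ is continuously differentiable and its gradient is L-Lipschitz on a compact convex set M with respect to a norm ‖·‖ (in dual pairing), then the curvature constant C_f of f over M satisfies C_f ≤ L · diam(M)², where diam(M) is the diameter of M in the norm ‖·‖. -/
/-!
Descent lemma: on the segment from `x` to `y`, the function
`t ↦ f (x + t (y - x)) - t f'(x)(y - x) - L t² ‖y - x‖² / 2` has nonpositive derivative,
because `(f'(x + t (y - x)) - f'(x))(y - x) ≤ L t ‖y - x‖²`; hence its value at `1` is at most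
its value at `0`. Applied to `y = x + γ (s - x)` this bounds the curvature quotient by
`L ‖s - x‖² ≤ L diam(M)²`.
-/

open Set InnerProductSpace RealInnerProductSpace

section

variable {E : Type*} [NormedAddCommGroup E] [NormedSpace ℝ E]
  {f : E → ℝ} {f' : E → StrongDual ℝ E} {s : Set E} {x y : E} {L : ℝ}

theorem Convex.sub_sub_fderiv_le_of_norm_fderiv_sub_le (hs : Convex ℝ s)
    (hf : ∀ z ∈ s, HasFDerivAt f (f' z) z) (hlip : ∀ z ∈ s, ‖f' z - f' x‖ ≤ L * ‖z - x‖)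
    (hx : x ∈ s) (hy : y ∈ s) :
    f y - f x - f' x (y - x) ≤ L / 2 * ‖y - x‖ ^ 2 := by
  set v := y - x
  set g : ℝ → ℝ := fun t ↦ f (x + t • v) - t * f' x v - L / 2 * t ^ 2 * ‖v‖ ^ 2
  have hseg : ∀ t ∈ Icc (0 : ℝ) 1, x + t • v ∈ s := fun _ ↦ hs.add_smul_sub_mem hx hy
  have hg : ∀ t ∈ Icc (0 : ℝ) 1,
      HasDerivAt g (f' (x + t • v) v - f' x v - L * t * ‖v‖ ^ 2) t := by
    intro t ht
    have hline : HasDerivAt (fun t : ℝ ↦ x + t • v) v t := by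
      simpa using ((hasDerivAt_id t).smul_const v).const_add x
    refine ((((hf _ (hseg t ht)).comp_hasDerivAt t hline).sub
      ((hasDerivAt_id t).mul_const (f' x v))).sub
      (((hasDerivAt_pow 2 t).const_mul (L / 2)).mul_const (‖v‖ ^ 2))).congr_deriv ?_
    simp only [Nat.cast_ofNat]
    ring
  have hg_nonpos : ∀ t ∈ Icc (0 : ℝ) 1, f' (x + t • v) v - f' x v - L * t * ‖v‖ ^ 2 ≤ 0 := by
    intro t ht
    rw [sub_nonpos]
    calc f' (x + t • v) v - f' x v = (f' (x + t • v) - f' x) v := rfl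
      _ ≤ ‖f' (x + t • v) - f' x‖ * ‖v‖ :=
        (le_abs_self _).trans ((f' (x + t • v) - f' x).le_opNorm v)
      _ ≤ L * ‖t • v‖ * ‖v‖ := by
        gcongr
        simpa using hlip _ (hseg t ht)
      _ = L * t * ‖v‖ ^ 2 := by rw [norm_smul, Real.norm_of_nonneg ht.1]; ring
  have hanti : AntitoneOn g (Icc 0 1) := by
    refine antitoneOn_of_hasDerivWithinAt_nonpos (convex_Icc 0 1)
      (f' := fun t ↦ f' (x + t • v) v - f' x v - L * t * ‖v‖ ^ 2)
      (fun t ht ↦ (hg t ht).continuousAt.continuousWithinAt) (fun t ht ↦ ?_) (fun t ht ↦ ?_)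
    all_goals rw [interior_Icc] at ht
    · exact (hg t (Ioo_subset_Icc_self ht)).hasDerivWithinAt
    · exact hg_nonpos t (Ioo_subset_Icc_self ht)
  have hg_one_le := hanti (left_mem_Icc.2 zero_le_one) (right_mem_Icc.2 zero_le_one) zero_le_one
  simp only [g, one_smul, zero_smul, add_zero, add_sub_cancel, v] at hg_one_le
  linarith

end

section

variable {F : Type*} [NormedAddCommGroup F] [InnerProductSpace ℝ F] [CompleteSpace F]
  {f : F → ℝ} {s : Set F} {x y : F} {L γ : ℝ}

theorem Convex.sub_sub_inner_gradient_le_of_norm_gradient_sub_le (hs : Convex ℝ s)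
    (hf : ∀ z ∈ s, DifferentiableAt ℝ f z)
    (hlip : ∀ z ∈ s, ‖gradient f z - gradient f x‖ ≤ L * ‖z - x‖) (hx : x ∈ s) (hy : y ∈ s) :
    f y - f x - ⟪gradient f x, y - x⟫ ≤ L / 2 * ‖y - x‖ ^ 2 :=
  hs.sub_sub_fderiv_le_of_norm_fderiv_sub_le (f' := fun z ↦ toDual ℝ F (gradient f z))
    (fun z hz ↦ (hf z hz).hasGradientAt.hasFDerivAt)
    (fun z hz ↦ by simpa only [← map_sub, LinearIsometryEquiv.norm_map] using hlip z hz) hx hy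

theorem Convex.two_div_sq_mul_sub_sub_inner_gradient_le (hs : Convex ℝ s)
    (hf : ∀ z ∈ s, DifferentiableAt ℝ f z)
    (hlip : ∀ z ∈ s, ‖gradient f z - gradient f x‖ ≤ L * ‖z - x‖) (hx : x ∈ s) (hy : y ∈ s)
    (hγ : γ ∈ Ioc 0 1) :
    2 / γ ^ 2 * (f (x + γ • (y - x)) - f x - ⟪gradient f x, γ • (y - x)⟫) ≤
      L * ‖y - x‖ ^ 2 := by
  have hdescent := hs.sub_sub_inner_gradient_le_of_norm_gradient_sub_le hf hlip hx
    (hs.add_smul_sub_mem hx hy (Ioc_subset_Icc_self hγ))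
  rw [add_sub_cancel_left, norm_smul, Real.norm_of_nonneg hγ.1.le] at hdescent
  calc 2 / γ ^ 2 * (f (x + γ • (y - x)) - f x - ⟪gradient f x, γ • (y - x)⟫)
      ≤ 2 / γ ^ 2 * (L / 2 * (γ * ‖y - x‖) ^ 2) := by gcongr
    _ = L * ‖y - x‖ ^ 2 := by field_simp [hγ.1.ne']

end

/-- If `f` is C¹ with `L`-Lipschitz gradient on a compact convex set `M`,
then the curvature constant `C_f` over `M` satisfies `C_f ≤ L ⬝ diam(M)²`. -/
theorem frankWolfe_curvature_le_lipschitz_diam_sq {d : ℕ}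
    (f : EuclideanSpace ℝ (Fin d) → ℝ) (M : Set (EuclideanSpace ℝ (Fin d))) (L : ℝ)
    (hMcp : IsCompact M) (hMcv : Convex ℝ M)
    (hf : ContDiff ℝ 1 f) (hL : 0 ≤ L)
    (hlip : ∀ x ∈ M, ∀ y ∈ M, ‖gradient f x - gradient f y‖ ≤ L * ‖x - y‖) :
    sSup {c : ℝ | ∃ x ∈ M, ∃ s ∈ M, ∃ γ ∈ Set.Ioc (0:ℝ) 1,
        c = 2 / γ ^ 2 *
          (f (x + γ • (s - x)) - f x - ⟪gradient f x, γ • (s - x)⟫)} ≤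
      L * Metric.diam M ^ 2 := by
  refine Real.sSup_le ?_ (by positivity)
  rintro c ⟨x, hx, s, hs, γ, hγ, rfl⟩
  calc _ ≤ L * ‖s - x‖ ^ 2 :=
        hMcv.two_div_sq_mul_sub_sub_inner_gradient_le
          (fun z _ ↦ (hf.differentiable one_ne_zero) z) (fun z hz ↦ hlip z hz x hx) hx hs hγ
    _ ≤ L * Metric.diam M ^ 2 := by
        gcongr
        exact dist_eq_norm s x ▸ Metric.dist_le_diam_of_mem hMcp.isBounded hs hx
end

section
/- Suppose f has curvature constant at most C > 0 over compact convex M, x ∈ M, s ∈ argmin_{s' ∈ M} ⟨s', ∇f(x)⟩, g := ⟨s − x, −∇f(x)⟩, and γ* := min{g/C, 1}. Then f(x + γ*(s − x)) ≤ f(x) − min{ g²/(2C), g − C/2 }. -/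
open RealInnerProductSpace

/-- one-step descent of Frank-Wolfe with the step size `γ* = min{g/C, 1}`:
`f(x + γ*(s-x)) ≤ f(x) - min{g²/(2C), g - C/2}`. -/
theorem frankWolfe_one_step_descent {d : ℕ}
    (f : EuclideanSpace ℝ (Fin d) → ℝ) (M : Set (EuclideanSpace ℝ (Fin d)))
    (hMcp : IsCompact M) (hMcv : Convex ℝ M) (hf : ContDiff ℝ 1 f)
    (C : ℝ) (hC : 0 < C)
    (hcurv : ∀ x ∈ M, ∀ s ∈ M, ∀ γ ∈ Set.Icc (0:ℝ) 1,
      f (x + γ • (s - x)) ≤ f x + γ * ⟪gradient f x, s - x⟫ + γ ^ 2 / 2 * C)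
    (x : EuclideanSpace ℝ (Fin d)) (hx : x ∈ M)
    (s : EuclideanSpace ℝ (Fin d)) (hs : s ∈ M)
    (hargmin : ∀ s' ∈ M, ⟪s, gradient f x⟫ ≤ ⟪s', gradient f x⟫)
    (g : ℝ) (hg : g = ⟪s - x, -gradient f x⟫)
    (γstar : ℝ) (hγstar : γstar = min (g / C) 1) :
    f (x + γstar • (s - x)) ≤ f x - min (g ^ 2 / (2 * C)) (g - C / 2) := by

  have hsym : ⟪gradient f x, s - x⟫ = -g := by
    rw [hg, inner_neg_right, real_inner_comm]; ring
  have hg0 : 0 ≤ g := by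
    have h := hargmin x hx
    have : ⟪s - x, gradient f x⟫ ≤ 0 := by
      rw [inner_sub_left]; linarith
    rw [hg, inner_neg_right]; linarith
  by_cases hgc : g ≤ C
  · have hγ : γstar = g / C := by
      rw [hγstar, min_eq_left]
      exact (div_le_one hC).mpr hgc
    have hmem : γstar ∈ Set.Icc (0:ℝ) 1 := by
      constructor
      · rw [hγ]; positivity
      · rw [hγ]; exact (div_le_one hC).mpr hgc
    have h := hcurv x hx s hs γstar hmem
    rw [hsym, hγ] at h
    have hbound : f x + g / C * (-g) + (g / C) ^ 2 / 2 * C = f x - g ^ 2 / (2 * C) := by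
      field_simp; ring
    have hmin : min (g ^ 2 / (2 * C)) (g - C / 2) ≤ g ^ 2 / (2 * C) := min_le_left _ _
    rw [hγ]
    linarith
  · have hγ : γstar = 1 := by
      rw [hγstar, min_eq_right]
      exact le_of_lt ((lt_div_iff₀ hC).mpr (by linarith))
    have hmem : γstar ∈ Set.Icc (0:ℝ) 1 := by rw [hγ]; exact ⟨zero_le_one, le_refl 1⟩
    have h := hcurv x hx s hs γstar hmem
    rw [hsym, hγ] at h
    have hmin : min (g ^ 2 / (2 * C)) (g - C / 2) ≤ g - C / 2 := min_le_right _ _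
    rw [hγ]
    linarith
end

section
/- Let (x_t) be the Frank-Wolfe iterates with step size γ_t = min{g_t/C, 1} (or line-search), where g_t is the FW gap at x_t. Then for all t ≥ 0: f(x_{t+1}) ≤ f(x_0) − Σ_{k=0}^{t} min{ g_k²/(2C), g_k − (C/2)·1_{g_k > C} }. -/
open RealInnerProductSpace

/-- telescoping the per-step descent of Frank-Wolfe with step size
`γ_t = min{g_t/C, 1}`:
`f(x_{t+1}) ≤ f(x_0) - Σ_{k=0}^{t} min{g_k²/(2C), g_k - (C/2)·1_{g_k > C}}`. -/
theorem frankWolfe_telescoped_descent {d : ℕ}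
    (f : EuclideanSpace ℝ (Fin d) → ℝ) (M : Set (EuclideanSpace ℝ (Fin d)))
    (hMcp : IsCompact M) (hMcv : Convex ℝ M) (hf : ContDiff ℝ 1 f)
    (C : ℝ) (hC : 0 < C)
    (hcurv : ∀ x ∈ M, ∀ s ∈ M, ∀ γ ∈ Set.Icc (0:ℝ) 1,
      f (x + γ • (s - x)) ≤ f x + γ * ⟪gradient f x, s - x⟫ + γ ^ 2 / 2 * C)
    (x s : ℕ → EuclideanSpace ℝ (Fin d)) (g γ : ℕ → ℝ)
    (hx0 : x 0 ∈ M)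
    (hsM : ∀ t, s t ∈ M)
    (hsmin : ∀ t, ∀ s' ∈ M, ⟪s t, gradient f (x t)⟫ ≤ ⟪s', gradient f (x t)⟫)
    (hg : ∀ t, g t = ⟪s t - x t, -gradient f (x t)⟫)
    (hγ : ∀ t, γ t = min (g t / C) 1)
    (hxsucc : ∀ t, x (t + 1) = x t + γ t • (s t - x t)) :
    ∀ t, f (x (t + 1)) ≤ f (x 0) -
      ∑ k ∈ Finset.range (t + 1),
        min (g k ^ 2 / (2 * C)) (g k - C / 2 * (if C < g k then 1 else 0)) := by
  -- membership of iterates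
  have hxM : ∀ t, x t ∈ M := by
    intro t
    induction t with
    | zero => exact hx0
    | succ n ih =>
      have hg0 : 0 ≤ g n := by
        have := hsmin n (x n) ih
        rw [hg n]
        simp only [inner_sub_left, inner_neg_right]
        have h1 : ⟪s n, gradient f (x n)⟫ = ⟪gradient f (x n), s n⟫ := real_inner_comm _ _
        have h2 : ⟪x n, gradient f (x n)⟫ = ⟪gradient f (x n), x n⟫ := real_inner_comm _ _
        linarith [this]
      have hγ0 : 0 ≤ γ n := by
        rw [hγ n]; exact le_min (div_nonneg hg0 hC.le) zero_le_one
      have hγ1 : γ n ≤ 1 := by rw [hγ n]; exact min_le_right _ _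
      have heq : x n + γ n • (s n - x n) = (1 - γ n) • x n + γ n • s n := by module
      rw [hxsucc n, heq]
      exact hMcv ih (hsM n) (by linarith) hγ0 (by ring)
  have hgnn : ∀ t, 0 ≤ g t := by
    intro t
    have := hsmin t (x t) (hxM t)
    rw [hg t]
    simp only [inner_sub_left, inner_neg_right]
    have h1 : ⟪s t, gradient f (x t)⟫ = ⟪gradient f (x t), s t⟫ := real_inner_comm _ _
    have h2 : ⟪x t, gradient f (x t)⟫ = ⟪gradient f (x t), x t⟫ := real_inner_comm _ _
    linarith [this]
  -- per-step descent
  have hstep : ∀ t, f (x (t + 1)) ≤ f (x t) -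
      min (g t ^ 2 / (2 * C)) (g t - C / 2 * (if C < g t then 1 else 0)) := by
    intro t
    have hg0 := hgnn t
    have hγ0 : 0 ≤ γ t := by
      rw [hγ t]; exact le_min (div_nonneg hg0 hC.le) zero_le_one
    have hγ1 : γ t ≤ 1 := by rw [hγ t]; exact min_le_right _ _
    have hcur := hcurv (x t) (hxM t) (s t) (hsM t) (γ t) ⟨hγ0, hγ1⟩
    have hinner : ⟪gradient f (x t), s t - x t⟫ = - g t := by
      rw [hg t, inner_neg_right, neg_neg, real_inner_comm]
    rw [hinner] at hcur
    rw [hxsucc t]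
    by_cases hle : g t ≤ C
    · have hγeq : γ t = g t / C := by
        rw [hγ t, min_eq_left]
        exact (div_le_one hC).mpr hle
      have hmin : min (g t ^ 2 / (2 * C)) (g t - C / 2 * (if C < g t then 1 else 0))
          ≤ g t ^ 2 / (2 * C) := min_le_left _ _
      have hbound : f (x t) + γ t * (- g t) + γ t ^ 2 / 2 * C
          = f (x t) - g t ^ 2 / (2 * C) := by
        rw [hγeq]; field_simp; ring
      linarith [hcur]
    · push_neg at hle
      have hγeq : γ t = 1 := by
        rw [hγ t, min_eq_right]
        exact (one_le_div hC).mpr hle.le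
      rw [if_pos hle]
      have hmin : min (g t ^ 2 / (2 * C)) (g t - C / 2 * 1)
          ≤ g t - C / 2 * 1 := min_le_right _ _
      have hbound : f (x t) + γ t * (- g t) + γ t ^ 2 / 2 * C
          = f (x t) - (g t - C / 2) := by
        rw [hγeq]; ring
      linarith [hcur]
  -- telescope
  intro t
  induction t with
  | zero =>
    simpa using hstep 0
  | succ n ih =>
    rw [Finset.sum_range_succ]
    have := hstep (n + 1)
    linarith
end

section
/- Consider the Frank-Wolfe algorithm with step size γ_t = min{g_t/C, 1} on a continuously differentiable (possibly non-convex) f with curvature constant at most C > 0 over a compact convex set M. Then the minimal FW gap satisfies min_{0≤k≤t} g_k ≤ max{2h_0, C}/√(t+1) for all t ≥ 0, where h_0 := f(x_0) − min_{x∈M} f(x). -/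
/-!
Each Frank-Wolfe step with `γ = min (g / C) 1` decreases `f` by at least
`min (g² / (2C)) (g / 2)`, by the curvature bound. These decreases telescope, so `t + 1` times
the decrease at the smallest gap `G` is at most `h₀`. If `G ≤ C` this gives `(t+1) G² ≤ 2 C h₀`,
otherwise `(t+1) G ≤ 2 h₀`; either way `G √(t+1) ≤ max (2 h₀) C`.
-/

open RealInnerProductSpace

section InnerProductSpace

variable {E : Type*} [NormedAddCommGroup E] [InnerProductSpace ℝ E]

lemma inner_sub_neg_nonneg_of_forall_inner_le {M : Set E} {s x v : E} (hx : x ∈ M)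
    (hs : ∀ s' ∈ M, ⟪s, v⟫ ≤ ⟪s', v⟫) : 0 ≤ ⟪s - x, -v⟫ := by
  rw [inner_neg_right, inner_sub_left]
  linarith [hs x hx]

lemma mem_of_succ_eq_add_smul_sub {M : Set E} (hM : Convex ℝ M) {x s : ℕ → E} {γ : ℕ → ℝ}
    (hx0 : x 0 ∈ M) (hs : ∀ t, s t ∈ M) (hγ : ∀ t, x t ∈ M → γ t ∈ Set.Icc (0 : ℝ) 1)
    (hsucc : ∀ t, x (t + 1) = x t + γ t • (s t - x t)) : ∀ t, x t ∈ M
  | 0 => hx0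
  | t + 1 => by
    have hxt := mem_of_succ_eq_add_smul_sub hM hx0 hs hγ hsucc t
    rw [hsucc t]
    exact hM.add_smul_sub_mem hxt (hs t) (hγ t hxt)

end InnerProductSpace

lemma min_div_one_mem_Icc {g C : ℝ} (hg : 0 ≤ g) (hC : 0 < C) :
    min (g / C) 1 ∈ Set.Icc (0 : ℝ) 1 :=
  ⟨le_min (div_nonneg hg hC.le) zero_le_one, min_le_right _ _⟩

/-- `min (g / C) 1` maximizes the curvature bound's guaranteed decrease `γ g - γ² C / 2`
over `γ ∈ [0, 1]`. -/
lemma min_sq_div_half_le_short_step_decrease {G g C : ℝ} (hG : 0 ≤ G) (hGg : G ≤ g)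
    (hC : 0 < C) :
    min (G ^ 2 / (2 * C)) (G / 2) ≤ min (g / C) 1 * g - (min (g / C) 1) ^ 2 / 2 * C := by
  rcases le_or_gt g C with hgC | hCg
  · rw [min_eq_left ((div_le_one hC).mpr hgC)]
    calc min (G ^ 2 / (2 * C)) (G / 2) ≤ G ^ 2 / (2 * C) := min_le_left _ _
      _ ≤ g ^ 2 / (2 * C) := by gcongr
      _ = g / C * g - (g / C) ^ 2 / 2 * C := by field_simp; ring
  · rw [min_eq_right ((one_le_div hC).mpr hCg.le)]
    linarith [min_le_right (G ^ 2 / (2 * C)) (G / 2)]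

lemma natCast_mul_le_sub_of_forall_le_sub_succ {a : ℕ → ℝ} {D : ℝ} {n : ℕ}
    (h : ∀ k < n, D ≤ a k - a (k + 1)) : (n : ℝ) * D ≤ a 0 - a n := by
  induction n with
  | zero => simp
  | succ n ih =>
    push_cast
    linarith [ih fun k hk => h k (by omega), h n n.lt_succ_self]

lemma le_max_div_sqrt_of_mul_min_le {G C h n : ℝ} (hG : 0 ≤ G) (hC : 0 < C) (hn : 1 ≤ n)
    (hGn : n * min (G ^ 2 / (2 * C)) (G / 2) ≤ h) : G ≤ max (2 * h) C / Real.sqrt n := by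
  set B := max (2 * h) C
  have hhB : 2 * h ≤ B := le_max_left _ _
  have hCB : C ≤ B := le_max_right _ _
  have hsqrt : 0 < Real.sqrt n := Real.sqrt_pos.mpr (by linarith)
  rw [le_div_iff₀ hsqrt]
  rcases le_or_gt G C with hGC | hCG
  · rw [min_eq_left (by rw [div_le_div_iff₀ (by linarith) two_pos]; nlinarith)] at hGn
    have hsq : (G * Real.sqrt n) ^ 2 ≤ B ^ 2 := by
      rw [mul_pow, Real.sq_sqrt (by linarith)]
      rw [← mul_div_assoc, div_le_iff₀ (by linarith)] at hGn
      nlinarith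
    exact (pow_le_pow_iff_left₀ (by positivity) (by linarith) two_ne_zero).mp hsq
  · rw [min_eq_right (by rw [div_le_div_iff₀ two_pos (by linarith)]; nlinarith)] at hGn
    have hsqrt_le : Real.sqrt n ≤ n := by
      nlinarith [Real.mul_self_sqrt (show (0 : ℝ) ≤ n by linarith), Real.one_le_sqrt.mpr hn]
    nlinarith

theorem frankWolfe_nonconvex_convergence_general {d : ℕ}
    (f : EuclideanSpace ℝ (Fin d) → ℝ) (M : Set (EuclideanSpace ℝ (Fin d)))
    (hMcp : IsCompact M) (hMcv : Convex ℝ M) (hf : ContDiff ℝ 1 f)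
    (C : ℝ) (hC : 0 < C)
    (hcurv : ∀ x ∈ M, ∀ s ∈ M, ∀ γ ∈ Set.Icc (0:ℝ) 1,
      f (x + γ • (s - x)) ≤ f x + γ * ⟪gradient f x, s - x⟫ + γ ^ 2 / 2 * C)
    (x s : ℕ → EuclideanSpace ℝ (Fin d)) (g γ : ℕ → ℝ)
    (hx0 : x 0 ∈ M)
    (hsM : ∀ t, s t ∈ M)
    (hsmin : ∀ t, ∀ s' ∈ M, ⟪s t, gradient f (x t)⟫ ≤ ⟪s', gradient f (x t)⟫)
    (hg : ∀ t, g t = ⟪s t - x t, -gradient f (x t)⟫)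
    (hγ : ∀ t, γ t = min (g t / C) 1)
    (hxsucc : ∀ t, x (t + 1) = x t + γ t • (s t - x t)) :
    ∀ t : ℕ,
      (Finset.range (t + 1)).inf' Finset.nonempty_range_add_one g ≤
        max (2 * (f (x 0) - sInf (f '' M))) C / Real.sqrt ((t : ℝ) + 1) := by
  have hg_nonneg_of_mem : ∀ t, x t ∈ M → 0 ≤ g t := fun t hxt =>
    hg t ▸ inner_sub_neg_nonneg_of_forall_inner_le hxt (hsmin t)
  have hγ_mem : ∀ t, x t ∈ M → γ t ∈ Set.Icc (0 : ℝ) 1 := fun t hxt =>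
    hγ t ▸ min_div_one_mem_Icc (hg_nonneg_of_mem t hxt) hC
  have hxM := mem_of_succ_eq_add_smul_sub hMcv hx0 hsM hγ_mem hxsucc
  have hdescent : ∀ t, f (x (t + 1)) ≤ f (x t) - (γ t * g t - γ t ^ 2 / 2 * C) := fun t => by
    have hcurv_t := hcurv _ (hxM t) _ (hsM t) _ (hγ_mem t (hxM t))
    rw [real_inner_comm, ← neg_neg (gradient f (x t)), inner_neg_right, ← hg t] at hcurv_t
    rw [hxsucc t]
    linarith
  intro t
  set G := (Finset.range (t + 1)).inf' Finset.nonempty_range_add_one g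
  have hG : 0 ≤ G := Finset.le_inf' _ _ fun k _ => hg_nonneg_of_mem k (hxM k)
  have htotal : ((t + 1 : ℕ) : ℝ) * min (G ^ 2 / (2 * C)) (G / 2) ≤ f (x 0) - f (x (t + 1)) :=
    natCast_mul_le_sub_of_forall_le_sub_succ (a := fun k => f (x k)) fun k hk => by
      have hGk : G ≤ g k := Finset.inf'_le g (Finset.mem_range.mpr hk)
      have := min_sq_div_half_le_short_step_decrease hG hGk hC
      rw [← hγ k] at this
      linarith [hdescent k]
  have hmin : sInf (f '' M) ≤ f (x (t + 1)) :=
    csInf_le (hMcp.image hf.continuous).bddBelow (Set.mem_image_of_mem f (hxM (t + 1)))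
  push_cast at htotal
  exact le_max_div_sqrt_of_mul_min_le hG hC (by linarith [t.cast_nonneg (α := ℝ)]) (by linarith)

/-- convergence of Frank-Wolfe with step size `γ_t = min{g_t/C, 1}` on a
possibly non-convex `f`: `min_{0≤k≤t} g_k ≤ max{2h_0, C}/√(t+1)`, where
`h_0 = f(x_0) - min_{x∈M} f(x)`. -/
theorem frankWolfe_nonconvex_convergence {d : ℕ}
    (f : EuclideanSpace ℝ (Fin d) → ℝ) (M : Set (EuclideanSpace ℝ (Fin d)))
    (hMne : M.Nonempty) (hMcp : IsCompact M) (hMcv : Convex ℝ M) (hf : ContDiff ℝ 1 f)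
    (C : ℝ) (hC : 0 < C)
    (hcurv : ∀ x ∈ M, ∀ s ∈ M, ∀ γ ∈ Set.Icc (0:ℝ) 1,
      f (x + γ • (s - x)) ≤ f x + γ * ⟪gradient f x, s - x⟫ + γ ^ 2 / 2 * C)
    (x s : ℕ → EuclideanSpace ℝ (Fin d)) (g γ : ℕ → ℝ)
    (hx0 : x 0 ∈ M)
    (hsM : ∀ t, s t ∈ M)
    (hsmin : ∀ t, ∀ s' ∈ M, ⟪s t, gradient f (x t)⟫ ≤ ⟪s', gradient f (x t)⟫)
    (hg : ∀ t, g t = ⟪s t - x t, -gradient f (x t)⟫)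
    (hγ : ∀ t, γ t = min (g t / C) 1)
    (hxsucc : ∀ t, x (t + 1) = x t + γ t • (s t - x t)) :
    ∀ t : ℕ,
      (Finset.range (t + 1)).inf' Finset.nonempty_range_add_one g ≤
        max (2 * (f (x 0) - sInf (f '' M))) C / Real.sqrt ((t : ℝ) + 1) :=
  frankWolfe_nonconvex_convergence_general f M hMcp hMcv hf C hC hcurv x s g γ hx0 hsM hsmin hg hγ
    hxsucc
end

section
/- If all iterates of the Frank-Wolfe algorithm lie in the compact convex set M (i.e., x_0 ∈ M implies x_t ∈ M for all t), then the sequence (f(x_t)) is non-increasing when the step size γ_t = min{g_t/C, 1} is used and f has curvature constant at most C over M. -/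
open RealInnerProductSpace

/-- with step size `γ_t = min{g_t/C, 1}` and curvature constant at most `C`
over `M`, the objective values `f(x_t)` are non-increasing. -/
theorem frankWolfe_objective_nonincreasing {d : ℕ}
    (f : EuclideanSpace ℝ (Fin d) → ℝ) (M : Set (EuclideanSpace ℝ (Fin d)))
    (hMcp : IsCompact M) (hMcv : Convex ℝ M) (hf : ContDiff ℝ 1 f)
    (C : ℝ) (hC : 0 < C)
    (hcurv : ∀ x ∈ M, ∀ s ∈ M, ∀ γ ∈ Set.Icc (0:ℝ) 1,
      f (x + γ • (s - x)) ≤ f x + γ * ⟪gradient f x, s - x⟫ + γ ^ 2 / 2 * C)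
    (x s : ℕ → EuclideanSpace ℝ (Fin d)) (g γ : ℕ → ℝ)
    (hx0 : x 0 ∈ M)
    (hsM : ∀ t, s t ∈ M)
    (hsmin : ∀ t, ∀ s' ∈ M, ⟪s t, gradient f (x t)⟫ ≤ ⟪s', gradient f (x t)⟫)
    (hg : ∀ t, g t = ⟪s t - x t, -gradient f (x t)⟫)
    (hγ : ∀ t, γ t = min (g t / C) 1)
    (hxsucc : ∀ t, x (t + 1) = x t + γ t • (s t - x t)) :
    ∀ t : ℕ, f (x (t + 1)) ≤ f (x t) := by
  -- g t ≥ 0 whenever x t ∈ M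
  have hgnn : ∀ t, x t ∈ M → 0 ≤ g t := by
    intro t hxt
    have h := hsmin t (x t) hxt
    rw [hg t]
    rw [inner_neg_right, inner_sub_left]
    linarith
  have hγ01 : ∀ t, x t ∈ M → γ t ∈ Set.Icc (0:ℝ) 1 := by
    intro t hxt
    have hgt := hgnn t hxt
    constructor
    · rw [hγ t]; exact le_min (div_nonneg hgt hC.le) zero_le_one
    · rw [hγ t]; exact min_le_right _ _
  -- all iterates in M
  have hxM : ∀ t, x t ∈ M := by
    intro t
    induction t with
    | zero => exact hx0
    | succ n ih =>
      rw [hxsucc n]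
      obtain ⟨h0, h1⟩ := hγ01 n ih
      have := hMcv ih (hsM n) (by linarith : (0:ℝ) ≤ 1 - γ n) h0 (by ring)
      convert this using 1
      simp only [smul_sub, sub_smul, one_smul]
      abel
  intro t
  have hxt := hxM t
  have hkey := hcurv (x t) hxt (s t) (hsM t) (γ t) (hγ01 t hxt)
  rw [← hxsucc t] at hkey
  have hip : ⟪gradient f (x t), s t - x t⟫ = -(g t) := by
    rw [hg t, inner_neg_right, real_inner_comm]; ring
  rw [hip] at hkey
  have hgt := hgnn t hxt
  -- show γ t * (-(g t)) + γ t ^ 2 / 2 * C ≤ 0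
  rcases le_or_gt (g t / C) 1 with h | h
  · have hγeq : γ t = g t / C := by rw [hγ t, min_eq_left h]
    have : γ t * -(g t) + γ t ^ 2 / 2 * C ≤ 0 := by
      rw [hγeq]
      have : g t / C * -g t + (g t / C) ^ 2 / 2 * C = -(g t ^ 2 / (2 * C)) := by
        field_simp; ring
      rw [this]
      have : 0 ≤ g t ^ 2 / (2 * C) := div_nonneg (sq_nonneg _) (by linarith)
      linarith
    linarith
  · have hγeq : γ t = 1 := by rw [hγ t, min_eq_right h.le]
    have hgC : C ≤ g t := by
      rw [lt_div_iff₀ hC, one_mul] at h; linarith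
    rw [hγeq] at hkey
    nlinarith
end
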